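/- The squared Wasserstein-2 distance between Gaussians, defined as W₂(ρ₀,ρ₁)² = ‖m₀−m₁‖² + trace(Σ₀ + Σ₁ − 2(Σ₀^{1/2}Σ₁Σ₀^{1/2})^{1/2}), is nonnegative, i.e., trace(Σ₀ + Σ₁) ≥ 2·trace((Σ₀^{1/2}Σ₁Σ₀^{1/2})^{1/2}) for positive semidefinite Σ₀, Σ₁. -/

import Mathlib

/-!
Write `A = Σ₀^{1/2}`, `B = Σ₁^{1/2}` and `X = B A`, so that `Σ₀^{1/2} Σ₁ Σ₀^{1/2} = Xᵀ X` and the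
trace of its square root is the sum of the singular values `σᵢ` of `X`. Choosing orthonormal bases
`(uᵢ)`, `(eᵢ)` with `X uᵢ = σᵢ eᵢ`, we get `σᵢ = ⟪A uᵢ, B eᵢ⟫ ≤ (‖A uᵢ‖² + ‖B eᵢ‖²) / 2`, and summing
over the two bases gives `(tr (Aᵀ A) + tr (B Bᵀ)) / 2 = (tr Σ₀ + tr Σ₁) / 2`.
-/

set_option autoImplicit false
open Matrix
noncomputable section

namespace Matrix.PosSemidef

open scoped ComplexOrder

/-- The old Mathlib (Dec 2024) `Matrix.PosSemidef.sqrt`, removed since; restated verbatim. -/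
def sqrt {n 𝕜 : Type*} [Fintype n] [RCLike 𝕜] [DecidableEq n] {A : Matrix n n 𝕜}
    (hA : PosSemidef A) : Matrix n n 𝕜 :=
  hA.1.eigenvectorUnitary.1 * diagonal ((↑) ∘ (fun x => Real.sqrt x) ∘ hA.1.eigenvalues) *
    (star hA.1.eigenvectorUnitary : Matrix n n 𝕜)

lemma posSemidef_sqrt {n 𝕜 : Type*} [Fintype n] [RCLike 𝕜] [DecidableEq n] {A : Matrix n n 𝕜}
    (hA : PosSemidef A) : PosSemidef hA.sqrt := by
  apply PosSemidef.mul_mul_conjTranspose_same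
  refine posSemidef_diagonal_iff.mpr fun i ↦ ?_
  rw [Function.comp_apply, RCLike.nonneg_iff]
  constructor
  · simp only [Function.comp_apply, RCLike.ofReal_re]
    exact Real.sqrt_nonneg _
  · simp only [Function.comp_apply, RCLike.ofReal_im]

end Matrix.PosSemidef

/-- The middle matrix `Σ₀^{1/2} Σ₁ Σ₀^{1/2}` is positive semidefinite (PSD version). -/
theorem midPosSemidef' {n : ℕ} {S0 S1 : Matrix (Fin n) (Fin n) ℝ}
    (h0 : S0.PosSemidef) (h1 : S1.PosSemidef) :
    (h0.sqrt * S1 * h0.sqrt).PosSemidef := by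
  have h := h1.mul_mul_conjTranspose_same h0.sqrt
  rwa [h0.posSemidef_sqrt.isHermitian] at h

open scoped InnerProductSpace

lemma exists_orthonormalBasis_eq_norm_smul {ι F : Type*} [Fintype ι]
    [NormedAddCommGroup F] [InnerProductSpace ℝ F] [FiniteDimensional ℝ F] (w : ι → F)
    (hw : Pairwise fun i j => ⟪w i, w j⟫_ℝ = 0) (hι : Module.finrank ℝ F = Fintype.card ι) :
    ∃ e : OrthonormalBasis ι ℝ F, ∀ i, w i = ‖w i‖ • e i := by
  have hv : Orthonormal ℝ (Set.domRestrict {i | w i ≠ 0} fun i => ‖w i‖⁻¹ • w i) := by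
    refine ⟨fun ⟨i, hi⟩ => ?_, fun ⟨i, _⟩ ⟨j, _⟩ hij => ?_⟩
    · simp [norm_smul, inv_mul_cancel₀ (norm_ne_zero_iff.mpr hi)]
    · simp [real_inner_smul_left, real_inner_smul_right, hw fun h => hij (Subtype.ext h)]
  obtain ⟨e, he⟩ := hv.exists_orthonormalBasis_extension_of_card_eq hι
  refine ⟨e, fun i => ?_⟩
  by_cases hi : w i = 0
  · simp [hi]
  · rw [he i hi, smul_inv_smul₀ (norm_ne_zero_iff.mpr hi)]

namespace LinearMap

variable {ι E F G : Type*} [Fintype ι]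
  [NormedAddCommGroup E] [InnerProductSpace ℝ E] [FiniteDimensional ℝ E]
  [NormedAddCommGroup F] [InnerProductSpace ℝ F] [FiniteDimensional ℝ F]
  [NormedAddCommGroup G] [InnerProductSpace ℝ G] [FiniteDimensional ℝ G]

lemma sum_norm_sq_apply_orthonormalBasis (T : E →ₗ[ℝ] F) (b : OrthonormalBasis ι ℝ E) :
    ∑ i, ‖T (b i)‖ ^ 2 = (T.adjoint ∘ₗ T).trace ℝ E := by
  rw [trace_eq_sum_inner _ b]
  refine Finset.sum_congr rfl fun i _ => ?_
  rw [comp_apply, adjoint_inner_right, real_inner_self_eq_norm_sq]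

lemma inner_apply_apply_of_adjoint_comp_self_eq_smul (T : E →ₗ[ℝ] F) (x : E) {y : E} {μ : ℝ}
    (hy : (T.adjoint ∘ₗ T) y = μ • y) : ⟪T x, T y⟫_ℝ = μ * ⟪x, y⟫_ℝ := by
  rw [← adjoint_inner_right, ← comp_apply, hy, real_inner_smul_right]

lemma two_mul_norm_apply_le (B : F →ₗ[ℝ] G) {y : F} {e : G} (he : ‖e‖ = 1)
    (hy : B y = ‖B y‖ • e) : 2 * ‖B y‖ ≤ ‖y‖ ^ 2 + ‖B.adjoint e‖ ^ 2 := by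
  have h : ⟪y, B.adjoint e⟫_ℝ = ‖B y‖ := by
    rw [adjoint_inner_right]
    nth_rw 1 [hy]
    rw [real_inner_smul_left, real_inner_self_eq_norm_sq, he, one_pow, mul_one]
  calc 2 * ‖B y‖ ≤ 2 * ‖y‖ * ‖B.adjoint e‖ := by
        rw [← h, mul_assoc]; gcongr; exact real_inner_le_norm _ _
    _ ≤ ‖y‖ ^ 2 + ‖B.adjoint e‖ ^ 2 := two_mul_le_add_sq _ _

theorem two_mul_sum_sqrt_le_trace_add_trace (A : E →ₗ[ℝ] F) (B : F →ₗ[ℝ] G)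
    (u : OrthonormalBasis ι ℝ E) (ν : ι → ℝ)
    (hu : ∀ i, ((B ∘ₗ A).adjoint ∘ₗ (B ∘ₗ A)) (u i) = ν i • u i)
    (hι : Module.finrank ℝ G = Fintype.card ι) :
    2 * ∑ i, √(ν i) ≤ (A.adjoint ∘ₗ A).trace ℝ E + (B ∘ₗ B.adjoint).trace ℝ G := by
  classical
  set X := B ∘ₗ A
  have hinner i j : ⟪X (u i), X (u j)⟫_ℝ = ν j * if i = j then 1 else 0 := by
    rw [X.inner_apply_apply_of_adjoint_comp_self_eq_smul _ (hu j),
      orthonormal_iff_ite.mp u.orthonormal]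
  have hsqrt i : √(ν i) = ‖X (u i)‖ := by
    rw [← Real.sqrt_sq (norm_nonneg (X (u i))), ← real_inner_self_eq_norm_sq, hinner,
      if_pos rfl, mul_one]
  obtain ⟨e, he⟩ := exists_orthonormalBasis_eq_norm_smul (fun i => X (u i))
    (fun i j hij => by simp only [hinner, if_neg hij, mul_zero]) hι
  have hB := sum_norm_sq_apply_orthonormalBasis B.adjoint e
  rw [adjoint_adjoint] at hB
  rw [← sum_norm_sq_apply_orthonormalBasis A u, ← hB, Finset.mul_sum, ← Finset.sum_add_distrib]
  gcongr with i
  rw [hsqrt]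
  exact B.two_mul_norm_apply_le (e.orthonormal.1 i) (he i)

end LinearMap

namespace Matrix

variable {n : Type*} [Fintype n] [DecidableEq n]

lemma trace_toEuclideanLin (M : Matrix n n ℝ) : (toEuclideanLin M).trace ℝ _ = M.trace := by
  rw [toEuclideanLin_eq_toLin_orthonormal, trace_toLin_eq]

lemma toEuclideanLin_transpose_eq_adjoint (M : Matrix n n ℝ) :
    toEuclideanLin Mᵀ = (toEuclideanLin M).adjoint := by
  rw [← toEuclideanLin_conjTranspose_eq_adjoint, conjTranspose_eq_transpose_of_trivial]

lemma IsHermitian.toEuclideanLin_eigenvectorBasis {M : Matrix n n ℝ} (hM : M.IsHermitian)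
    (i : n) :
    toEuclideanLin M (hM.eigenvectorBasis i) = hM.eigenvalues i • hM.eigenvectorBasis i := by
  ext1
  simp [toLpLin_apply, hM.mulVec_eigenvectorBasis]

namespace PosSemidef

open scoped ComplexOrder in
lemma sqrt_mul_self {𝕜 : Type*} [RCLike 𝕜] {A : Matrix n n 𝕜} (hA : PosSemidef A) :
    hA.sqrt * hA.sqrt = A := by
  let C : Matrix n n 𝕜 := hA.1.eigenvectorUnitary
  let E := diagonal ((↑) ∘ Real.sqrt ∘ hA.1.eigenvalues : n → 𝕜)
  suffices C * (E * (star C * C) * E) * star C = A by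
    rw [PosSemidef.sqrt]
    simpa only [← mul_assoc] using this
  have hE : E * E = diagonal ((↑) ∘ hA.1.eigenvalues) := by
    rw [diagonal_mul_diagonal]
    congr! with v
    simp [← pow_two, ← RCLike.ofReal_pow, Real.sq_sqrt (hA.eigenvalues_nonneg v)]
  have hs := hA.1.spectral_theorem
  rw [Unitary.conjStarAlgAut_apply] at hs
  simp only [C, Unitary.coe_star_mul_self, Matrix.mul_one, hE]
  exact hs.symm

lemma transpose_sqrt {A : Matrix n n ℝ} (hA : A.PosSemidef) : hA.sqrtᵀ = hA.sqrt := by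
  simpa using hA.posSemidef_sqrt.isHermitian.eq

lemma trace_sqrt {A : Matrix n n ℝ} (hA : A.PosSemidef) :
    hA.sqrt.trace = ∑ i, √(hA.1.eigenvalues i) := by
  rw [PosSemidef.sqrt, trace_mul_comm, ← Matrix.mul_assoc, Unitary.coe_star_mul_self,
    Matrix.one_mul, trace_diagonal]
  simp

theorem two_mul_trace_sqrt_le {A B M : Matrix n n ℝ} (hM : M.PosSemidef)
    (hMAB : M = Aᵀ * (Bᵀ * B) * A) :
    2 * hM.sqrt.trace ≤ (Aᵀ * A).trace + (B * Bᵀ).trace := by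
  have hX : ((toEuclideanLin B ∘ₗ toEuclideanLin A).adjoint ∘ₗ
      (toEuclideanLin B ∘ₗ toEuclideanLin A)) = toEuclideanLin M := by
    rw [← toLpLin_mul_same, ← toEuclideanLin_transpose_eq_adjoint, ← toLpLin_mul_same, hMAB,
      transpose_mul, Matrix.mul_assoc, Matrix.mul_assoc, Matrix.mul_assoc]
  have := LinearMap.two_mul_sum_sqrt_le_trace_add_trace (toEuclideanLin A) (toEuclideanLin B)
    hM.1.eigenvectorBasis hM.1.eigenvalues
    (fun i => hX ▸ hM.1.toEuclideanLin_eigenvectorBasis i) finrank_euclideanSpace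
  rwa [← toEuclideanLin_transpose_eq_adjoint, ← toEuclideanLin_transpose_eq_adjoint,
    ← toLpLin_mul_same, ← toLpLin_mul_same, trace_toEuclideanLin, trace_toEuclideanLin,
    ← trace_sqrt] at this

end PosSemidef

end Matrix

/-- `trace(Σ₀ + Σ₁) ≥ 2·trace((Σ₀^{1/2}Σ₁Σ₀^{1/2})^{1/2})` for PSD `Σ₀, Σ₁`,
i.e. the squared Gaussian Wasserstein-2 distance is nonnegative. -/
theorem stmt2 {n : ℕ} (S0 S1 : Matrix (Fin n) (Fin n) ℝ)
    (h0 : S0.PosSemidef) (h1 : S1.PosSemidef) (m0 m1 : EuclideanSpace ℝ (Fin n)) :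
    (0 ≤ ‖m0 - m1‖ ^ 2 + (S0 + S1 - 2 • (midPosSemidef' h0 h1).sqrt).trace) ∧
    2 * ((midPosSemidef' h0 h1).sqrt).trace ≤ (S0 + S1).trace := by
  have hA := h0.transpose_sqrt
  have hB := h1.transpose_sqrt
  have key : 2 * (midPosSemidef' h0 h1).sqrt.trace ≤ (S0 + S1).trace := by
    have := (midPosSemidef' h0 h1).two_mul_trace_sqrt_le (A := h0.sqrt) (B := h1.sqrt)
      (by rw [hA, hB, h1.sqrt_mul_self])
    rwa [hA, hB, h0.sqrt_mul_self, h1.sqrt_mul_self, ← trace_add] at this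
  refine ⟨?_, key⟩
  rw [trace_sub, trace_smul, nsmul_eq_mul, Nat.cast_ofNat]
  linarith [sq_nonneg ‖m0 - m1‖]
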